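/- arXiv:1612.07269 — 7 statements merged into one kernel-verified Lean document; each statement's English description precedes it below -/
import Mathlib

section
/- Let X and Y be real-valued random variables on a probability space and let f : ℝ → ℝ be nondecreasing with Y = f(X) almost surely. Then for all real x, y, H(x,y) = min(F1(x), F2(y)). -/
/-!
For nondecreasing `f` the events `{X ≤ x}` and `{f X ≤ y}` are nested (which one contains the
other depends on whether `f x ≤ y`), so their intersection has the smaller of the two probabilities.
-/

open MeasureTheory Set

theorem Monotone.Iic_subset_or_preimage_Iic_subset {α β : Type*} [LinearOrder α] [Preorder β]
    {f : α → β} (hf : Monotone f) (x : α) (y : β) :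
    Iic x ⊆ f ⁻¹' Iic y ∨ f ⁻¹' Iic y ⊆ Iic x := by
  by_cases hfx : f x ≤ y
  · exact Or.inl fun t ht => (hf ht).trans hfx
  · exact Or.inr fun t hft => not_lt.1 fun hxt => hfx ((hf hxt.le).trans hft)

theorem MeasureTheory.measure_inter_eq_min_of_subset_or_subset {Ω : Type*} [MeasurableSpace Ω]
    (μ : Measure Ω) {s t : Set Ω} (h : s ⊆ t ∨ t ⊆ s) : μ (s ∩ t) = min (μ s) (μ t) := by
  rcases h with h | h
  · rw [inter_eq_left.2 h, min_eq_left (measure_mono h)]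
  · rw [inter_eq_right.2 h, min_eq_right (measure_mono h)]

theorem comonotone_joint_cdf_eq_min_general
    {Ω : Type*} [MeasurableSpace Ω] (μ : Measure Ω) [IsProbabilityMeasure μ]
    (X Y : Ω → ℝ)
    (f : ℝ → ℝ) (hf : Monotone f) (hXY : ∀ᵐ ω ∂μ, Y ω = f (X ω)) (x y : ℝ) :
    (μ {ω | X ω ≤ x ∧ Y ω ≤ y}).toReal
      = min (μ {ω | X ω ≤ x}).toReal (μ {ω | Y ω ≤ y}).toReal := by
  have hY : ({ω | Y ω ≤ y} : Set Ω) =ᵐ[μ] X ⁻¹' (f ⁻¹' Iic y) := by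
    filter_upwards [hXY] with ω hω
    change (Y ω ≤ y) = (f (X ω) ≤ y)
    rw [hω]
  have hjoint : ({ω | X ω ≤ x ∧ Y ω ≤ y} : Set Ω) =ᵐ[μ]
      (X ⁻¹' Iic x ∩ X ⁻¹' (f ⁻¹' Iic y) : Set Ω) :=
    (Filter.EventuallyEq.refl _ _).inter hY
  have hnested : X ⁻¹' Iic x ⊆ X ⁻¹' (f ⁻¹' Iic y) ∨ X ⁻¹' (f ⁻¹' Iic y) ⊆ X ⁻¹' Iic x :=
    (hf.Iic_subset_or_preimage_Iic_subset x y).imp preimage_mono preimage_mono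
  rw [measure_congr hjoint, measure_congr hY, measure_inter_eq_min_of_subset_or_subset μ hnested,
    ENNReal.toReal_min (measure_ne_top μ _) (measure_ne_top μ _)]
  rfl

/-- Comonotonic case of Fréchet's theorem: if `Y = f(X)` almost surely for a
nondecreasing function `f`, then the joint CDF attains the Fréchet–Hoeffding
upper bound: `H(x,y) = min(F1(x), F2(y))` for all `x, y`. -/
theorem comonotone_joint_cdf_eq_min
    {Ω : Type*} [MeasurableSpace Ω] (μ : Measure Ω) [IsProbabilityMeasure μ]
    (X Y : Ω → ℝ) (hX : Measurable X) (hY : Measurable Y)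
    (f : ℝ → ℝ) (hf : Monotone f) (hXY : ∀ᵐ ω ∂μ, Y ω = f (X ω)) (x y : ℝ) :
    (μ {ω | X ω ≤ x ∧ Y ω ≤ y}).toReal
      = min (μ {ω | X ω ≤ x}).toReal (μ {ω | Y ω ≤ y}).toReal :=
  comonotone_joint_cdf_eq_min_general μ X Y f hf hXY x y
end

section
/- Let X and Y be real-valued random variables on a probability space and let f : ℝ → ℝ be nonincreasing with Y = f(X) almost surely. Then for all real x, y, H(x,y) = max(F1(x) + F2(y) − 1, 0). -/
/-!
For nonincreasing `f`, the events `{X ≤ x}` and `{f X ≤ y}` either cover the whole space or are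
disjoint, according as some `t ≤ x` has `f t ≤ y` or not. Inclusion–exclusion then gives
`H(x, y) = F₁(x) + F₂(y) - 1` in the first case and `H(x, y) = 0 ≥ F₁(x) + F₂(y) - 1` in the second.
-/

open MeasureTheory Set Filter

theorem Antitone.Iic_union_preimage_Iic_eq_univ_or_disjoint {α β : Type*} [LinearOrder α]
    [Preorder β] {f : α → β} (hf : Antitone f) (x : α) (y : β) :
    Iic x ∪ f ⁻¹' Iic y = univ ∨ Disjoint (Iic x) (f ⁻¹' Iic y) := by
  by_cases h : ∃ t ≤ x, f t ≤ y
  · obtain ⟨t, htx, hty⟩ := h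
    left
    exact eq_univ_of_forall fun s =>
      (le_or_gt s x).imp id fun hxs => (hf (htx.trans hxs.le)).trans hty
  · exact .inr <| disjoint_left.2 fun s hsx hsy => h ⟨s, hsx, hsy⟩

section Probability

variable {Ω : Type*} [MeasurableSpace Ω] {μ : Measure Ω} {s t : Set Ω}

theorem measureReal_inter_eq_of_union_ae_eq_univ [IsProbabilityMeasure μ]
    (ht : NullMeasurableSet t μ) (h : (s ∪ t : Set Ω) =ᵐ[μ] univ) :
    μ.real (s ∩ t) = μ.real s + μ.real t - 1 := by
  have := measureReal_union_add_inter₀ (s := s) ht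
  rw [measureReal_congr h, probReal_univ] at this
  linarith

theorem measureReal_add_le_one_of_measureReal_inter_eq_zero [IsZeroOrProbabilityMeasure μ]
    (ht : NullMeasurableSet t μ) (h : μ.real (s ∩ t) = 0) : μ.real s + μ.real t ≤ 1 := by
  rw [← measureReal_union_add_inter₀ ht, h, add_zero]
  exact measureReal_le_one

end Probability

theorem countermonotone_joint_cdf_eq_max_general
    {Ω : Type*} [MeasurableSpace Ω] (μ : Measure Ω) [IsProbabilityMeasure μ]
    (X Y : Ω → ℝ) (hY : Measurable Y)
    (f : ℝ → ℝ) (hf : Antitone f) (hXY : ∀ᵐ ω ∂μ, Y ω = f (X ω)) (x y : ℝ) :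
    (μ {ω | X ω ≤ x ∧ Y ω ≤ y}).toReal
      = max ((μ {ω | X ω ≤ x}).toReal + (μ {ω | Y ω ≤ y}).toReal - 1) 0 := by
  change μ.real (X ⁻¹' Iic x ∩ Y ⁻¹' Iic y)
    = max (μ.real (X ⁻¹' Iic x) + μ.real (Y ⁻¹' Iic y) - 1) 0
  have hYm : NullMeasurableSet (Y ⁻¹' Iic y) μ := (hY measurableSet_Iic).nullMeasurableSet
  have hYf : Y ⁻¹' Iic y =ᵐ[μ] X ⁻¹' (f ⁻¹' Iic y) := by
    filter_upwards [hXY] with ω hω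
    change (Y ω ≤ y) = (f (X ω) ≤ y)
    rw [hω]
  rcases hf.Iic_union_preimage_Iic_eq_univ_or_disjoint x y with hcover | hdisj
  · have hunion : (X ⁻¹' Iic x ∪ Y ⁻¹' Iic y : Set Ω) =ᵐ[μ] univ := by
      simpa only [← preimage_union, hcover, preimage_univ] using
        (EventuallyEq.refl (ae μ) (X ⁻¹' Iic x)).union hYf
    rw [← measureReal_inter_eq_of_union_ae_eq_univ hYm hunion, max_eq_left measureReal_nonneg]
  · have hinter : μ.real (X ⁻¹' Iic x ∩ Y ⁻¹' Iic y) = 0 := by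
      have hnull : (X ⁻¹' Iic x ∩ Y ⁻¹' Iic y : Set Ω) =ᵐ[μ] (∅ : Set Ω) := by
        simpa only [← preimage_inter, hdisj.inter_eq, preimage_empty] using
          (EventuallyEq.refl (ae μ) (X ⁻¹' Iic x)).inter hYf
      rw [measureReal_congr hnull, measureReal_empty]
    rw [hinter, max_eq_right]
    linarith [measureReal_add_le_one_of_measureReal_inter_eq_zero hYm hinter]

/-- Countermonotonic case of Fréchet's theorem: if `Y = f(X)` almost surely for a
nonincreasing function `f`, then the joint CDF attains the Fréchet–Hoeffding
lower bound: `H(x,y) = max(F1(x) + F2(y) − 1, 0)` for all `x, y`. -/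
theorem countermonotone_joint_cdf_eq_max
    {Ω : Type*} [MeasurableSpace Ω] (μ : Measure Ω) [IsProbabilityMeasure μ]
    (X Y : Ω → ℝ) (hX : Measurable X) (hY : Measurable Y)
    (f : ℝ → ℝ) (hf : Antitone f) (hXY : ∀ᵐ ω ∂μ, Y ω = f (X ω)) (x y : ℝ) :
    (μ {ω | X ω ≤ x ∧ Y ω ≤ y}).toReal
      = max ((μ {ω | X ω ≤ x}).toReal + (μ {ω | Y ω ≤ y}).toReal - 1) 0 :=
  countermonotone_joint_cdf_eq_max_general μ X Y hY f hf hXY x y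
end

section
/- Let f : ℝ → ℝ and x0 ∈ ℝ be such that f is nonincreasing on (−∞, x0] and nondecreasing on [x0, ∞) (a single global minimum). Let X be a real-valued random variable and Y = f(X) almost surely, with the law of Y atomless. Then: (i) for every x ≤ x0, P(X ≤ x, Y ≤ f(x)) = 0 and F1(x) + F2(f(x)) ≤ 1, so H(x, f(x)) = max(F1(x) + F2(f(x)) − 1, 0) (the Fréchet–Hoeffding lower bound); and (ii) for every x ≥ x0, P(X ≤ x, Y ≤ f(x)) = F2(f(x)) and F2(f(x)) ≤ F1(x), so H(x, f(x)) = min(F1(x), F2(f(x))) (the Fréchet–Hoeffding upper bound). -/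
/-!
On the nonincreasing branch, `X ≤ x ≤ x0` forces `Y = f X ≥ f x` almost surely; on the
nondecreasing branch, `x0 ≤ x < X` forces the same. Since `Y` has no atom at `f x`, these
inequalities are almost surely strict, so `{X ≤ x, Y ≤ f x}` is null in the first case and
almost equal to `{Y ≤ f x}` in the second. The remaining claims are the Fréchet–Hoeffding
bounds `F1 + F2 - 1 ≤ H ≤ min F1 F2`.
-/

open MeasureTheory Set

section

variable {Ω : Type*} [MeasurableSpace Ω] {μ : Measure Ω}

theorem measureReal_add_measureReal_sub_one_le_measureReal_inter [IsZeroOrProbabilityMeasure μ]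
    (s : Set Ω) {t : Set Ω} (ht : NullMeasurableSet t μ) :
    μ.real s + μ.real t - 1 ≤ μ.real (s ∩ t) := by
  rw [← measureReal_union_add_inter₀ ht]
  linarith [measureReal_le_one (μ := μ) (s := s ∪ t)]

theorem ae_imp_lt_of_ae_imp_le {P : Ω → Prop} {Y : Ω → ℝ} {c : ℝ}
    (hatom : μ {ω | Y ω = c} = 0) (h : ∀ᵐ ω ∂μ, P ω → c ≤ Y ω) :
    ∀ᵐ ω ∂μ, P ω → c < Y ω := by
  filter_upwards [h, measure_eq_zero_iff_ae_notMem.mp hatom] with ω hle hne hP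
  exact (hle hP).lt_of_ne' hne

variable {X Y : Ω → ℝ} {f : ℝ → ℝ} {x0 x : ℝ}

theorem ae_apply_le_of_le_of_antitoneOn (hXY : ∀ᵐ ω ∂μ, Y ω = f (X ω))
    (hf : AntitoneOn f (Iic x0)) (hx : x ≤ x0) :
    ∀ᵐ ω ∂μ, X ω ≤ x → f x ≤ Y ω := by
  filter_upwards [hXY] with ω hω hXx
  exact hω ▸ hf (hXx.trans hx) hx hXx

theorem ae_apply_le_of_lt_of_monotoneOn (hXY : ∀ᵐ ω ∂μ, Y ω = f (X ω))
    (hf : MonotoneOn f (Ici x0)) (hx : x0 ≤ x) :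
    ∀ᵐ ω ∂μ, x < X ω → f x ≤ Y ω := by
  filter_upwards [hXY] with ω hω hxX
  exact hω ▸ hf hx (hx.trans hxX.le) hxX.le

theorem measure_setOf_le_and_le_eq_zero {c : ℝ} (h : ∀ᵐ ω ∂μ, X ω ≤ x → c < Y ω) :
    μ {ω | X ω ≤ x ∧ Y ω ≤ c} = 0 := by
  refine measure_eq_zero_iff_ae_notMem.mpr ?_
  filter_upwards [h] with ω hω hmem
  exact (hω hmem.1).not_ge hmem.2

theorem setOf_le_and_le_ae_eq {c : ℝ} (h : ∀ᵐ ω ∂μ, x < X ω → c < Y ω) :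
    {ω | X ω ≤ x ∧ Y ω ≤ c} =ᵐ[μ] {ω | Y ω ≤ c} := by
  refine Filter.eventuallyEq_set.mpr ?_
  filter_upwards [h] with ω hω
  exact ⟨And.right, fun hY => ⟨not_lt.mp fun hxX => (hω hxX).not_ge hY, hY⟩⟩

end

theorem joint_cdf_single_minimum_general
    {Ω : Type*} [MeasurableSpace Ω] (μ : Measure Ω) [IsProbabilityMeasure μ]
    (X Y : Ω → ℝ) (hY : Measurable Y)
    (f : ℝ → ℝ) (x0 : ℝ)
    (hdec : AntitoneOn f (Set.Iic x0)) (hinc : MonotoneOn f (Set.Ici x0))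
    (hXY : ∀ᵐ ω ∂μ, Y ω = f (X ω))
    (hatomless : ∀ c : ℝ, μ {ω | Y ω = c} = 0) :
    (∀ x : ℝ, x ≤ x0 →
      (μ {ω | X ω ≤ x ∧ Y ω ≤ f x}).toReal = 0 ∧
      (μ {ω | X ω ≤ x}).toReal + (μ {ω | Y ω ≤ f x}).toReal ≤ 1 ∧
      (μ {ω | X ω ≤ x ∧ Y ω ≤ f x}).toReal
        = max ((μ {ω | X ω ≤ x}).toReal + (μ {ω | Y ω ≤ f x}).toReal - 1) 0) ∧
    (∀ x : ℝ, x0 ≤ x →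
      (μ {ω | X ω ≤ x ∧ Y ω ≤ f x}).toReal = (μ {ω | Y ω ≤ f x}).toReal ∧
      (μ {ω | Y ω ≤ f x}).toReal ≤ (μ {ω | X ω ≤ x}).toReal ∧
      (μ {ω | X ω ≤ x ∧ Y ω ≤ f x}).toReal
        = min (μ {ω | X ω ≤ x}).toReal (μ {ω | Y ω ≤ f x}).toReal) := by
  simp only [← measureReal_def]
  refine ⟨fun x hx => ?_, fun x hx => ?_⟩
  · have hH : μ.real {ω | X ω ≤ x ∧ Y ω ≤ f x} = 0 :=
      (measureReal_eq_zero_iff).mpr <| measure_setOf_le_and_le_eq_zero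
        (ae_imp_lt_of_ae_imp_le (hatomless (f x)) (ae_apply_le_of_le_of_antitoneOn hXY hdec hx))
    have hW : μ.real {ω | X ω ≤ x} + μ.real {ω | Y ω ≤ f x} - 1
        ≤ μ.real {ω | X ω ≤ x ∧ Y ω ≤ f x} :=
      measureReal_add_measureReal_sub_one_le_measureReal_inter _
        (hY measurableSet_Iic).nullMeasurableSet
    exact ⟨hH, by linarith, by rw [hH, max_eq_right (by linarith)]⟩
  · have hH : μ.real {ω | X ω ≤ x ∧ Y ω ≤ f x} = μ.real {ω | Y ω ≤ f x} :=
      measureReal_congr (setOf_le_and_le_ae_eq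
        (ae_imp_lt_of_ae_imp_le (hatomless (f x)) (ae_apply_le_of_lt_of_monotoneOn hXY hinc hx)))
    have hM : μ.real {ω | Y ω ≤ f x} ≤ μ.real {ω | X ω ≤ x} :=
      hH ▸ measureReal_mono fun _ hω => hω.1
    exact ⟨hH, hM, by rw [hH, min_eq_right hM]⟩

/-- Single-global-minimum case of the paper's Theorem 3: if `f` is nonincreasing
on `(−∞, x0]` and nondecreasing on `[x0, ∞)`, `Y = f(X)` almost surely, and the
law of `Y` is atomless, then the joint CDF equals the Fréchet–Hoeffding lower
bound along the nonincreasing branch and the upper bound along the nondecreasing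
branch. -/
theorem joint_cdf_single_minimum
    {Ω : Type*} [MeasurableSpace Ω] (μ : Measure Ω) [IsProbabilityMeasure μ]
    (X Y : Ω → ℝ) (hX : Measurable X) (hY : Measurable Y)
    (f : ℝ → ℝ) (x0 : ℝ)
    (hdec : AntitoneOn f (Set.Iic x0)) (hinc : MonotoneOn f (Set.Ici x0))
    (hXY : ∀ᵐ ω ∂μ, Y ω = f (X ω))
    (hatomless : ∀ c : ℝ, μ {ω | Y ω = c} = 0) :
    (∀ x : ℝ, x ≤ x0 →
      (μ {ω | X ω ≤ x ∧ Y ω ≤ f x}).toReal = 0 ∧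
      (μ {ω | X ω ≤ x}).toReal + (μ {ω | Y ω ≤ f x}).toReal ≤ 1 ∧
      (μ {ω | X ω ≤ x ∧ Y ω ≤ f x}).toReal
        = max ((μ {ω | X ω ≤ x}).toReal + (μ {ω | Y ω ≤ f x}).toReal - 1) 0) ∧
    (∀ x : ℝ, x0 ≤ x →
      (μ {ω | X ω ≤ x ∧ Y ω ≤ f x}).toReal = (μ {ω | Y ω ≤ f x}).toReal ∧
      (μ {ω | Y ω ≤ f x}).toReal ≤ (μ {ω | X ω ≤ x}).toReal ∧
      (μ {ω | X ω ≤ x ∧ Y ω ≤ f x}).toReal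
        = min (μ {ω | X ω ≤ x}).toReal (μ {ω | Y ω ≤ f x}).toReal) :=
  joint_cdf_single_minimum_general μ X Y hY f x0 hdec hinc hXY hatomless
end

section
/- Let f : ℝ → ℝ and x0 ∈ ℝ be such that f is nondecreasing on (−∞, x0] and nonincreasing on [x0, ∞) (a single global maximum). Let X be a real-valued random variable and Y = f(X) almost surely. Then: (i) for every x ≤ x0, H(x, f(x)) = F1(x) and F1(x) ≤ F2(f(x)), so H(x, f(x)) = min(F1(x), F2(f(x))) (the Fréchet–Hoeffding upper bound); and (ii) for every x ≥ x0, H(x, f(x)) = F1(x) + F2(f(x)) − 1 ≥ 0, so H(x, f(x)) = max(F1(x) + F2(f(x)) − 1, 0) (the Fréchet–Hoeffding lower bound). -/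
/-!
Along the increasing branch, `X ≤ x ≤ x0` forces `f X ≤ f x`, so `{X ≤ x}` is almost surely
contained in `{Y ≤ f x}`: the joint CDF is `F1 x`, and `F1 x ≤ F2 (f x)`. Along the decreasing
branch, `X > x ≥ x0` forces `f X ≤ f x`, so `{X ≤ x} ∪ {Y ≤ f x}` is almost sure, and
inclusion–exclusion gives `H = F1 + F2 - 1`.
-/

open MeasureTheory Set

namespace MeasureTheory

variable {Ω : Type*} [MeasurableSpace Ω] {μ : Measure Ω} {s t : Set Ω}

theorem measureReal_mono_ae [IsFiniteMeasure μ] (h : s ≤ᵐ[μ] t) : μ.real s ≤ μ.real t :=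
  ENNReal.toReal_mono (measure_ne_top μ t) (measure_mono_ae h)

theorem measureReal_inter_eq_left_of_ae_subset (h : s ≤ᵐ[μ] t) : μ.real (s ∩ t) = μ.real s :=
  measureReal_congr <| inter_subset_left.eventuallyLE.antisymm <| by
    simpa using ae_le_set_inter (Filter.EventuallyLE.refl _ s) h

theorem measureReal_inter_eq_add_sub_one_of_ae_union [IsProbabilityMeasure μ]
    (hs : MeasurableSet s) (h : ∀ᵐ ω ∂μ, ω ∈ s ∪ t) :
    μ.real (s ∩ t) = μ.real s + μ.real t - 1 := by
  have hunion : μ.real (s ∪ t) = 1 := by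
    rw [measureReal_congr (ae_eq_univ.mpr (ae_iff.mp h)), probReal_univ]
  linarith [measureReal_union_add_inter' (μ := μ) hs (t := t)]

end MeasureTheory

section SingleMaximum

variable {Ω : Type*} [MeasurableSpace Ω] {μ : Measure Ω} {X Y : Ω → ℝ} {f : ℝ → ℝ} {x0 x : ℝ}

theorem ae_subset_of_monotoneOn (hinc : MonotoneOn f (Iic x0)) (hXY : ∀ᵐ ω ∂μ, Y ω = f (X ω))
    (hx : x ≤ x0) : {ω | X ω ≤ x} ≤ᵐ[μ] {ω | Y ω ≤ f x} := by
  filter_upwards [hXY] with ω hω hωx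
  change Y ω ≤ f x
  exact hω ▸ hinc (hωx.trans hx) hx hωx

theorem ae_union_of_antitoneOn (hdec : AntitoneOn f (Ici x0)) (hXY : ∀ᵐ ω ∂μ, Y ω = f (X ω))
    (hx : x0 ≤ x) : ∀ᵐ ω ∂μ, ω ∈ {ω | X ω ≤ x} ∪ {ω | Y ω ≤ f x} := by
  filter_upwards [hXY] with ω hω
  rcases le_or_gt (X ω) x with hωx | hxω
  · exact Or.inl hωx
  · right
    change Y ω ≤ f x
    exact hω ▸ hdec hx (hx.trans hxω.le) hxω.le

end SingleMaximum

theorem joint_cdf_single_maximum_general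
    {Ω : Type*} [MeasurableSpace Ω] (μ : Measure Ω) [IsProbabilityMeasure μ]
    (X Y : Ω → ℝ) (hX : Measurable X)
    (f : ℝ → ℝ) (x0 : ℝ)
    (hinc : MonotoneOn f (Set.Iic x0)) (hdec : AntitoneOn f (Set.Ici x0))
    (hXY : ∀ᵐ ω ∂μ, Y ω = f (X ω)) :
    (∀ x : ℝ, x ≤ x0 →
      (μ {ω | X ω ≤ x ∧ Y ω ≤ f x}).toReal = (μ {ω | X ω ≤ x}).toReal ∧
      (μ {ω | X ω ≤ x}).toReal ≤ (μ {ω | Y ω ≤ f x}).toReal ∧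
      (μ {ω | X ω ≤ x ∧ Y ω ≤ f x}).toReal
        = min (μ {ω | X ω ≤ x}).toReal (μ {ω | Y ω ≤ f x}).toReal) ∧
    (∀ x : ℝ, x0 ≤ x →
      (μ {ω | X ω ≤ x ∧ Y ω ≤ f x}).toReal
        = (μ {ω | X ω ≤ x}).toReal + (μ {ω | Y ω ≤ f x}).toReal - 1 ∧
      0 ≤ (μ {ω | X ω ≤ x}).toReal + (μ {ω | Y ω ≤ f x}).toReal - 1 ∧
      (μ {ω | X ω ≤ x ∧ Y ω ≤ f x}).toReal
        = max ((μ {ω | X ω ≤ x}).toReal + (μ {ω | Y ω ≤ f x}).toReal - 1) 0) := by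
  simp only [← measureReal_def]
  refine ⟨fun x hx => ?_, fun x hx => ?_⟩
  · have hsub := ae_subset_of_monotoneOn hinc hXY hx
    have hjoint : μ.real {ω | X ω ≤ x ∧ Y ω ≤ f x} = μ.real {ω | X ω ≤ x} :=
      measureReal_inter_eq_left_of_ae_subset hsub
    have hle := measureReal_mono_ae hsub
    exact ⟨hjoint, hle, hjoint.trans (min_eq_left hle).symm⟩
  · have hjoint : μ.real {ω | X ω ≤ x ∧ Y ω ≤ f x}
        = μ.real {ω | X ω ≤ x} + μ.real {ω | Y ω ≤ f x} - 1 :=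
      measureReal_inter_eq_add_sub_one_of_ae_union (hX measurableSet_Iic)
        (ae_union_of_antitoneOn hdec hXY hx)
    have hnonneg := hjoint ▸ measureReal_nonneg
    exact ⟨hjoint, hnonneg, hjoint.trans (max_eq_left hnonneg).symm⟩

/-- Single-global-maximum case of the paper's Theorem 3: if `f` is nondecreasing
on `(−∞, x0]` and nonincreasing on `[x0, ∞)` and `Y = f(X)` almost surely, then
the joint CDF equals the Fréchet–Hoeffding upper bound along the nondecreasing
branch and the lower bound along the nonincreasing branch. -/
theorem joint_cdf_single_maximum
    {Ω : Type*} [MeasurableSpace Ω] (μ : Measure Ω) [IsProbabilityMeasure μ]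
    (X Y : Ω → ℝ) (hX : Measurable X) (hY : Measurable Y)
    (f : ℝ → ℝ) (x0 : ℝ)
    (hinc : MonotoneOn f (Set.Iic x0)) (hdec : AntitoneOn f (Set.Ici x0))
    (hXY : ∀ᵐ ω ∂μ, Y ω = f (X ω)) :
    (∀ x : ℝ, x ≤ x0 →
      (μ {ω | X ω ≤ x ∧ Y ω ≤ f x}).toReal = (μ {ω | X ω ≤ x}).toReal ∧
      (μ {ω | X ω ≤ x}).toReal ≤ (μ {ω | Y ω ≤ f x}).toReal ∧
      (μ {ω | X ω ≤ x ∧ Y ω ≤ f x}).toReal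
        = min (μ {ω | X ω ≤ x}).toReal (μ {ω | Y ω ≤ f x}).toReal) ∧
    (∀ x : ℝ, x0 ≤ x →
      (μ {ω | X ω ≤ x ∧ Y ω ≤ f x}).toReal
        = (μ {ω | X ω ≤ x}).toReal + (μ {ω | Y ω ≤ f x}).toReal - 1 ∧
      0 ≤ (μ {ω | X ω ≤ x}).toReal + (μ {ω | Y ω ≤ f x}).toReal - 1 ∧
      (μ {ω | X ω ≤ x ∧ Y ω ≤ f x}).toReal
        = max ((μ {ω | X ω ≤ x}).toReal + (μ {ω | Y ω ≤ f x}).toReal - 1) 0) :=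
  joint_cdf_single_maximum_general μ X Y hX f x0 hinc hdec hXY
end

section
/- Let X and Y be real-valued random variables on a probability space. Then λ(x,y) = 0 for every point (x,y) with 0 < F1(x) < 1 and 0 < F2(y) < 1 if and only if X and Y are independent. -/
/-!
Where `0 < F1 < 1` and `0 < F2 < 1`, both denominators of `λ` are nonzero (`F1 F2` lies strictly
between `max (F1 + F2 - 1) 0` and `min F1 F2`), so `λ = 0` there exactly when `H = F1 F2`.
At the remaining points one of the events `{X ≤ x}`, `{Y ≤ y}` is null or conull, and the
factorisation `H = F1 F2` holds automatically. Finally, the half-lines `Iic x` form a π-system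
generating the Borel σ-algebra, so factorisation of the joint CDF everywhere is independence.
-/

open MeasureTheory

/-- The relative distance function `λ` of the paper, expressed in terms of the
joint CDF value `H = H(x,y)` and the marginal CDF values `F1 = F1(x)`,
`F2 = F2(y)`. -/
noncomputable def relDist (H F1 F2 : ℝ) : ℝ :=
  if F1 * F2 ≤ H then (H - F1 * F2) / (min F1 F2 - F1 * F2)
  else (H - F1 * F2) / (max (F1 + F2 - 1) 0 - F1 * F2)

open ProbabilityTheory Set

lemma relDist_eq_zero_iff {H F1 F2 : ℝ} (h1 : 0 < F1) (h1' : F1 < 1) (h2 : 0 < F2)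
    (h2' : F2 < 1) : relDist H F1 F2 = 0 ↔ H = F1 * F2 := by
  have hmin : F1 * F2 < min F1 F2 := lt_min (by nlinarith) (by nlinarith)
  have hmax : max (F1 + F2 - 1) 0 < F1 * F2 := max_lt (by nlinarith) (by positivity)
  unfold relDist
  split_ifs <;> rw [div_eq_zero_iff, sub_eq_zero, or_iff_left (by linarith)]

section CDF

variable {Ω α β : Type*} {mΩ : MeasurableSpace Ω} {μ : Measure Ω}
  [TopologicalSpace α] [LinearOrder α] [OrderTopology α] [SecondCountableTopology α]
  [MeasurableSpace α] [BorelSpace α]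
  [TopologicalSpace β] [LinearOrder β] [OrderTopology β] [SecondCountableTopology β]
  [MeasurableSpace β] [BorelSpace β]

lemma comap_eq_generateFrom_preimage_Iic {X : Ω → α} :
    MeasurableSpace.comap X ‹MeasurableSpace α› =
      MeasurableSpace.generateFrom (preimage X '' range Iic) := by
  rw [BorelSpace.measurable_eq (α := α), borel_eq_generateFrom_Iic,
    MeasurableSpace.comap_generateFrom]

lemma indepFun_iff_measure_inter_preimage_Iic_eq_mul [IsZeroOrProbabilityMeasure μ]
    {X : Ω → α} {Y : Ω → β} (hX : Measurable X) (hY : Measurable Y) :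
    IndepFun X Y μ ↔ ∀ x y, μ (X ⁻¹' Iic x ∩ Y ⁻¹' Iic y) = μ (X ⁻¹' Iic x) * μ (Y ⁻¹' Iic y) := by
  refine ⟨fun h x y => h.measure_inter_preimage_eq_mul _ _ measurableSet_Iic measurableSet_Iic,
    fun h => ?_⟩
  refine IndepSets.indep hX.comap_le hY.comap_le (isPiSystem_Iic.comap X)
    (isPiSystem_Iic.comap Y) comap_eq_generateFrom_preimage_Iic
    comap_eq_generateFrom_preimage_Iic ?_
  rintro _ _ ⟨_, ⟨x, rfl⟩, rfl⟩ ⟨_, ⟨y, rfl⟩, rfl⟩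
  simpa using h x y

end CDF

section ProbabilitySpace

variable {Ω : Type*} {mΩ : MeasurableSpace Ω} {μ : Measure Ω} [IsProbabilityMeasure μ]
  {s t : Set Ω}

lemma measureReal_inter_eq_mul_of_eq_zero_or_one (hs : MeasurableSet s)
    (h : μ.real s = 0 ∨ μ.real s = 1) : μ.real (s ∩ t) = μ.real s * μ.real t := by
  rcases h with h | h
  · rw [h, zero_mul]
    exact measureReal_mono_null inter_subset_left h
  · have hsc : μ sᶜ = 0 := (prob_compl_eq_zero_iff hs).2 ((ENNReal.toReal_eq_one_iff _).1 h)
    rw [h, one_mul, inter_comm, measureReal_def, measure_inter_conull hsc, measureReal_def]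

lemma measureReal_inter_eq_mul_of_nondegenerate (hs : MeasurableSet s) (ht : MeasurableSet t)
    (h : 0 < μ.real s → μ.real s < 1 → 0 < μ.real t → μ.real t < 1 →
      μ.real (s ∩ t) = μ.real s * μ.real t) :
    μ.real (s ∩ t) = μ.real s * μ.real t := by
  rcases (measureReal_nonneg (μ := μ) (s := s)).eq_or_lt with hs0 | hs0
  · exact measureReal_inter_eq_mul_of_eq_zero_or_one hs (.inl hs0.symm)
  rcases (measureReal_le_one (μ := μ) (s := s)).eq_or_lt with hs1 | hs1
  · exact measureReal_inter_eq_mul_of_eq_zero_or_one hs (.inr hs1)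
  rcases (measureReal_nonneg (μ := μ) (s := t)).eq_or_lt with ht0 | ht0
  · rw [inter_comm, mul_comm]
    exact measureReal_inter_eq_mul_of_eq_zero_or_one ht (.inl ht0.symm)
  rcases (measureReal_le_one (μ := μ) (s := t)).eq_or_lt with ht1 | ht1
  · rw [inter_comm, mul_comm]
    exact measureReal_inter_eq_mul_of_eq_zero_or_one ht (.inr ht1)
  exact h hs0 hs1 ht0 ht1

lemma measure_inter_eq_mul_iff_measureReal :
    μ (s ∩ t) = μ s * μ t ↔ μ.real (s ∩ t) = μ.real s * μ.real t := by
  rw [measureReal_def, measureReal_def, measureReal_def, ← ENNReal.toReal_mul,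
    ENNReal.toReal_eq_toReal_iff' (by finiteness) (by finiteness)]

end ProbabilitySpace

/-- Theorem 4(b) of the paper: `λ(x,y) = 0` at every point `(x,y)` with
`0 < F1(x) < 1` and `0 < F2(y) < 1` if and only if `X` and `Y` are
independent. -/
theorem relDist_eq_zero_iff_indep
    {Ω : Type*} [MeasurableSpace Ω] (μ : Measure Ω) [IsProbabilityMeasure μ]
    (X Y : Ω → ℝ) (hX : Measurable X) (hY : Measurable Y) :
    (∀ x y : ℝ,
      0 < (μ {ω | X ω ≤ x}).toReal → (μ {ω | X ω ≤ x}).toReal < 1 →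
      0 < (μ {ω | Y ω ≤ y}).toReal → (μ {ω | Y ω ≤ y}).toReal < 1 →
      relDist (μ {ω | X ω ≤ x ∧ Y ω ≤ y}).toReal
        (μ {ω | X ω ≤ x}).toReal (μ {ω | Y ω ≤ y}).toReal = 0)
    ↔ ProbabilityTheory.IndepFun X Y μ := by
  rw [indepFun_iff_measure_inter_preimage_Iic_eq_mul hX hY]
  refine forall₂_congr fun x y => ?_
  rw [measure_inter_eq_mul_iff_measureReal]
  constructor
  · intro h
    exact measureReal_inter_eq_mul_of_nondegenerate (hX measurableSet_Iic) (hY measurableSet_Iic)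
      fun h1 h1' h2 h2' => (relDist_eq_zero_iff h1 h1' h2 h2').1 (h h1 h1' h2 h2')
  · intro h h1 h1' h2 h2'
    exact (relDist_eq_zero_iff h1 h1' h2 h2').2 h
end

section
/- Let X and Y be real-valued random variables on a probability space and let f : ℝ → ℝ be monotone (either nondecreasing on ℝ or nonincreasing on ℝ) with Y = f(X) almost surely. Then λ(x,y) = 1 for every point (x,y) with 0 < F1(x) < 1 and 0 < F2(y) < 1. -/
/-!
Off a null set, `{Y ≤ y}` is the preimage under `X` of `L = f⁻¹(Iic y)`. If `f` is monotone, `L`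
is a lower set of `ℝ`, hence comparable with `Iic x`, so `{X ≤ x}` and `{Y ≤ y}` are nested and
`H = min F1 F2` (the upper Fréchet bound). If `f` is antitone, `L` is an upper set, so `{X ≤ x}`
and `{Y ≤ y}` either cover `Ω` or are disjoint, and `H = max (F1 + F2 - 1) 0` (the lower Fréchet
bound). At either bound the numerator and the denominator of `λ` coincide and do not vanish.
-/

open MeasureTheory

open Set

theorem relDist_min_eq_one {F1 F2 : ℝ} (h1 : 0 < F1) (h1' : F1 < 1) (h2 : 0 < F2)
    (h2' : F2 < 1) : relDist (min F1 F2) F1 F2 = 1 := by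
  have hlt : F1 * F2 < min F1 F2 := lt_min (by nlinarith) (by nlinarith)
  rw [relDist, if_pos hlt.le, div_self (sub_ne_zero.2 hlt.ne')]

theorem relDist_max_eq_one {F1 F2 : ℝ} (h1 : 0 < F1) (h1' : F1 < 1) (h2 : 0 < F2)
    (h2' : F2 < 1) : relDist (max (F1 + F2 - 1) 0) F1 F2 = 1 := by
  have hlt : max (F1 + F2 - 1) 0 < F1 * F2 := max_lt (by nlinarith) (by positivity)
  rw [relDist, if_neg hlt.not_ge, div_self (sub_ne_zero.2 hlt.ne)]

theorem IsLowerSet.union_eq_univ_or_inter_eq_empty {α : Type*} [LinearOrder α] {s t : Set α}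
    (hs : IsLowerSet s) (ht : IsUpperSet t) : s ∪ t = univ ∨ s ∩ t = ∅ := by
  rcases hs.compl.total ht with h | h
  · exact Or.inl (compl_subset_iff_union.1 h)
  · exact Or.inr (disjoint_iff_inter_eq_empty.1 (subset_compl_iff_disjoint_left.1 h))

section Measure

variable {Ω : Type*} [MeasurableSpace Ω] {μ : Measure Ω} {s t : Set Ω}

theorem measureReal_inter_eq_min_of_subset_or_subset [IsFiniteMeasure μ]
    (h : s ⊆ t ∨ t ⊆ s) : μ.real (s ∩ t) = min (μ.real s) (μ.real t) := by
  rcases h with h | h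
  · rw [inter_eq_left.2 h, min_eq_left (measureReal_mono h)]
  · rw [inter_eq_right.2 h, min_eq_right (measureReal_mono h)]

theorem measureReal_inter_eq_max_of_union_eq_univ_or_inter_eq_empty [IsProbabilityMeasure μ]
    (hs : MeasurableSet s) (h : s ∪ t = univ ∨ s ∩ t = ∅) :
    μ.real (s ∩ t) = max (μ.real s + μ.real t - 1) 0 := by
  have hadd := measureReal_union_add_inter' (μ := μ) (t := t) hs
  rcases h with h | h
  · rw [h, probReal_univ] at hadd
    rw [max_eq_left (by linarith [measureReal_nonneg (μ := μ) (s := s ∩ t)])]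
    linarith
  · rw [h, measureReal_empty] at hadd ⊢
    rw [max_eq_right (by linarith [measureReal_le_one (μ := μ) (s := s ∪ t)])]

end Measure

theorem relDist_eq_one_of_monotone_general
    {Ω : Type*} [MeasurableSpace Ω] (μ : Measure Ω) [IsProbabilityMeasure μ]
    (X Y : Ω → ℝ) (hX : Measurable X)
    (f : ℝ → ℝ) (hf : Monotone f ∨ Antitone f)
    (hXY : ∀ᵐ ω ∂μ, Y ω = f (X ω)) :
    ∀ x y : ℝ,
      0 < (μ {ω | X ω ≤ x}).toReal → (μ {ω | X ω ≤ x}).toReal < 1 →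
      0 < (μ {ω | Y ω ≤ y}).toReal → (μ {ω | Y ω ≤ y}).toReal < 1 →
      relDist (μ {ω | X ω ≤ x ∧ Y ω ≤ y}).toReal
        (μ {ω | X ω ≤ x}).toReal (μ {ω | Y ω ≤ y}).toReal = 1 := by
  intro x y
  have hB : {ω | Y ω ≤ y} =ᵐ[μ] X ⁻¹' (f ⁻¹' Iic y) := by
    filter_upwards [hXY] with ω h
    change (Y ω ≤ y) = (f (X ω) ≤ y)
    rw [h]
  change 0 < μ.real (X ⁻¹' Iic x) → μ.real (X ⁻¹' Iic x) < 1 →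
    0 < μ.real {ω | Y ω ≤ y} → μ.real {ω | Y ω ≤ y} < 1 →
    relDist (μ.real (X ⁻¹' Iic x ∩ {ω | Y ω ≤ y})) (μ.real (X ⁻¹' Iic x))
      (μ.real {ω | Y ω ≤ y}) = 1
  rw [measureReal_congr (Filter.EventuallyEq.rfl.inter hB), measureReal_congr hB]
  intro hF1 hF1' hF2 hF2'
  rcases hf with hf | hf
  · have hnested := ((isLowerSet_Iic x).total ((isLowerSet_Iic y).preimage hf)).imp
      (preimage_mono (f := X)) (preimage_mono (f := X))
    rw [measureReal_inter_eq_min_of_subset_or_subset hnested]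
    exact relDist_min_eq_one hF1 hF1' hF2 hF2'
  · have hL : IsUpperSet (f ⁻¹' Iic y) := fun _ _ hab ha => (hf hab).trans ha
    have hcover : X ⁻¹' Iic x ∪ X ⁻¹' (f ⁻¹' Iic y) = univ ∨
        X ⁻¹' Iic x ∩ X ⁻¹' (f ⁻¹' Iic y) = ∅ :=
      ((isLowerSet_Iic x).union_eq_univ_or_inter_eq_empty hL).imp
      (fun h => by rw [← preimage_union, h, preimage_univ])
      (fun h => by rw [← preimage_inter, h, preimage_empty])
    rw [measureReal_inter_eq_max_of_union_eq_univ_or_inter_eq_empty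
      (hX measurableSet_Iic) hcover]
    exact relDist_max_eq_one hF1 hF1' hF2 hF2'

/-- Theorem 4(c) of the paper: if `Y = f(X)` almost surely for a monotone
function `f` (nondecreasing or nonincreasing on all of `ℝ`), then `λ(x,y) = 1`
at every point `(x,y)` with `0 < F1(x) < 1` and `0 < F2(y) < 1`. -/
theorem relDist_eq_one_of_monotone
    {Ω : Type*} [MeasurableSpace Ω] (μ : Measure Ω) [IsProbabilityMeasure μ]
    (X Y : Ω → ℝ) (hX : Measurable X) (hY : Measurable Y)
    (f : ℝ → ℝ) (hf : Monotone f ∨ Antitone f)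
    (hXY : ∀ᵐ ω ∂μ, Y ω = f (X ω)) :
    ∀ x y : ℝ,
      0 < (μ {ω | X ω ≤ x}).toReal → (μ {ω | X ω ≤ x}).toReal < 1 →
      0 < (μ {ω | Y ω ≤ y}).toReal → (μ {ω | Y ω ≤ y}).toReal < 1 →
      relDist (μ {ω | X ω ≤ x ∧ Y ω ≤ y}).toReal
        (μ {ω | X ω ≤ x}).toReal (μ {ω | Y ω ≤ y}).toReal = 1 :=
  relDist_eq_one_of_monotone_general μ X Y hX f hf hXY
end

section
/- Let X and Y be real-valued random variables on a probability space and let x, y be real numbers such that all four quadrant probabilities are positive: P(X ≤ x, Y ≤ y) > 0, P(X ≤ x, Y > y) > 0, P(X > x, Y ≤ y) > 0, and P(X > x, Y > y) > 0. Then max(F1(x) + F2(y) − 1, 0) < H(x,y) < min(F1(x), F2(y)); moreover 0 < F1(x) < 1, 0 < F2(y) < 1, and λ(x,y) < 1. -/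
/-!
With `a, b, c, d` the probabilities of the four quadrants at `(x, y)`, one has `F1 = a + b`,
`F2 = a + c` and `a + b + c + d = 1`, so `F1 + F2 - 1 = a - d < a < min (a + b) (a + c)` as soon
as all four are positive. These strict Fréchet–Hoeffding bounds already force `0 < F1, F2 < 1`
and make both branches of `λ` a quotient of a number by one of the same sign and
strictly larger absolute value.
-/

open MeasureTheory

theorem relDist_lt_one {H F1 F2 : ℝ} (hlow : max (F1 + F2 - 1) 0 < H) (hup : H < min F1 F2) :
    relDist H F1 F2 < 1 := by
  unfold relDist
  split_ifs with hpos
  · rw [div_lt_one (by linarith)]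
    linarith
  · rw [div_lt_one_of_neg (by linarith)]
    linarith

section Events

variable {Ω : Type*} [MeasurableSpace Ω] {μ : Measure Ω} {A B : Set Ω}

theorem probReal_compl_inter_compl [IsProbabilityMeasure μ] (hA : MeasurableSet A)
    (hB : MeasurableSet B) :
    μ.real (Aᶜ ∩ Bᶜ) = 1 - μ.real A - μ.real B + μ.real (A ∩ B) := by
  rw [← Set.compl_union, probReal_compl_eq_one_sub (hA.union hB)]
  linarith [measureReal_union_add_inter (μ := μ) (s := A) hB]

theorem probReal_inter_lt_min [IsFiniteMeasure μ] (hA : MeasurableSet A) (hB : MeasurableSet B)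
    (hAB : 0 < μ.real (A \ B)) (hBA : 0 < μ.real (B \ A)) :
    μ.real (A ∩ B) < min (μ.real A) (μ.real B) := by
  have hA_split := measureReal_inter_add_sdiff (μ := μ) (s := A) hB
  have hB_split := measureReal_inter_add_sdiff (μ := μ) (s := B) hA
  rw [Set.inter_comm] at hB_split
  exact lt_min (by linarith) (by linarith)

theorem max_add_sub_one_lt_probReal_inter [IsProbabilityMeasure μ] (hA : MeasurableSet A)
    (hB : MeasurableSet B) (hinter : 0 < μ.real (A ∩ B)) (hcompl : 0 < μ.real (Aᶜ ∩ Bᶜ)) :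
    max (μ.real A + μ.real B - 1) 0 < μ.real (A ∩ B) := by
  rw [probReal_compl_inter_compl hA hB] at hcompl
  exact max_lt (by linarith) hinter

end Events

/-- The quadrant lemma underlying the paper's Theorem 5: if all four quadrant
probabilities at `(x,y)` are positive, then the joint CDF lies strictly between
the Fréchet–Hoeffding bounds at `(x,y)`, the marginal CDF values lie strictly
between `0` and `1`, and `λ(x,y) < 1`. -/
theorem relDist_lt_one_of_quadrants_pos
    {Ω : Type*} [MeasurableSpace Ω] (μ : Measure Ω) [IsProbabilityMeasure μ]
    (X Y : Ω → ℝ) (hX : Measurable X) (hY : Measurable Y) (x y : ℝ)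
    (h1 : 0 < (μ {ω | X ω ≤ x ∧ Y ω ≤ y}).toReal)
    (h2 : 0 < (μ {ω | X ω ≤ x ∧ y < Y ω}).toReal)
    (h3 : 0 < (μ {ω | x < X ω ∧ Y ω ≤ y}).toReal)
    (h4 : 0 < (μ {ω | x < X ω ∧ y < Y ω}).toReal) :
    max ((μ {ω | X ω ≤ x}).toReal + (μ {ω | Y ω ≤ y}).toReal - 1) 0
      < (μ {ω | X ω ≤ x ∧ Y ω ≤ y}).toReal ∧
    (μ {ω | X ω ≤ x ∧ Y ω ≤ y}).toReal
      < min (μ {ω | X ω ≤ x}).toReal (μ {ω | Y ω ≤ y}).toReal ∧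
    0 < (μ {ω | X ω ≤ x}).toReal ∧ (μ {ω | X ω ≤ x}).toReal < 1 ∧
    0 < (μ {ω | Y ω ≤ y}).toReal ∧ (μ {ω | Y ω ≤ y}).toReal < 1 ∧
    relDist (μ {ω | X ω ≤ x ∧ Y ω ≤ y}).toReal
      (μ {ω | X ω ≤ x}).toReal (μ {ω | Y ω ≤ y}).toReal < 1 := by
  set A := {ω | X ω ≤ x}
  set B := {ω | Y ω ≤ y}
  have hA : MeasurableSet A := hX measurableSet_Iic
  have hB : MeasurableSet B := hY measurableSet_Iic
  have hAB : {ω | X ω ≤ x ∧ y < Y ω} = A \ B := by ext; simp [A, B]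
  have hBA : {ω | x < X ω ∧ Y ω ≤ y} = B \ A := by ext; simp [A, B, and_comm]
  have hcompl : {ω | x < X ω ∧ y < Y ω} = Aᶜ ∩ Bᶜ := by ext; simp [A, B]
  rw [hAB] at h2
  rw [hBA] at h3
  rw [hcompl] at h4
  have hlow := max_add_sub_one_lt_probReal_inter hA hB h1 h4
  have hup := probReal_inter_lt_min hA hB h2 h3
  have := max_lt_iff.mp hlow
  have := lt_min_iff.mp hup
  refine ⟨hlow, hup, ?_, ?_, ?_, ?_, relDist_lt_one hlow hup⟩ <;>
    simp only [measureReal_def] at * <;> linarith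
end
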